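/- arXiv:2603.11702 — 2 statements merged into one kernel-verified Lean document; each statement's English description precedes it below -/
import Mathlib

section
/- Let δ > 0 and let f : (0,∞) → ℝ be continuous with |f(t)| ≤ c·e^{-δ t} for t ≥ 1 and |f(t)| ≤ c·e^{-δ/t} for 0 < t ≤ 1. If ∫₀^∞ f(t)·t^{-m} dt = 0 for every integer m ≥ 0, then f ≡ 0 on (0,∞). -/
/-!
Substituting `u = t⁻¹`, the moments say that `u ↦ f (1/u) / u²` is orthogonal to every polynomial
on `(0, ∞)`. Since this function decays like `exp (-δ u)`, the Taylor series of `exp (a u)` may be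
integrated term by term for `|a| < δ`: all moments of `f t * exp (a / t)` vanish as well.
Iterating with small steps `a < 0` yields `∫ f t * exp (-k / t) dt = 0` for every `k ≥ 1`.
The substitution `v = exp (-1 / t)` turns these into the vanishing of all moments of a continuous
integrable function on `(0, 1)`, which is then zero by the Weierstrass approximation theorem.
-/

open MeasureTheory Set Real Filter Polynomial
open scoped Nat ContDiff

theorem Real.hasSum_pow_div_factorial (y : ℝ) : HasSum (fun k : ℕ => y ^ k / k !) (exp y) := by
  rw [exp_eq_exp_ℝ]
  exact NormedSpace.expSeries_div_hasSum_exp y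

theorem pow_mul_exp_neg_mul_le {ε x : ℝ} (hε : 0 < ε) (hx : 0 ≤ x) (m : ℕ) :
    x ^ m * exp (-(ε * x)) ≤ m ! / ε ^ m := by
  have h := pow_div_factorial_le_exp _ (mul_nonneg hε.le hx) m
  rw [div_le_iff₀ (by positivity), mul_pow] at h
  rw [le_div_iff₀ (by positivity), exp_neg, mul_right_comm, ← div_eq_mul_inv,
    div_le_iff₀ (exp_pos _)]
  linarith

theorem hasSum_integral_mul_exp {α : Type*} [MeasurableSpace α] {μ : Measure α} {f u : α → ℝ}
    (hf : AEStronglyMeasurable f μ) (hu : AEStronglyMeasurable u μ) (a : ℝ)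
    (hint : Integrable (fun x => f x * exp (|a| * |u x|)) μ) :
    HasSum (fun k : ℕ => a ^ k / k ! * ∫ x, f x * u x ^ k ∂μ) (∫ x, f x * exp (a * u x) ∂μ) := by
  simp_rw [← integral_const_mul]
  refine hasSum_integral_of_dominated_convergence
    (fun k x => |f x| * ((|a| * |u x|) ^ k / k !)) (fun k => (hf.mul (hu.pow k)).const_mul _)
    (fun k => .of_forall fun x => ?_)
    (.of_forall fun x => ((hasSum_pow_div_factorial _).mul_left _).summable) ?_
    (.of_forall fun x => ?_)
  · simp only [norm_mul, norm_div, norm_pow, Real.norm_eq_abs, Nat.abs_cast, mul_pow]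
    exact le_of_eq (by ring)
  · refine hint.norm.congr (.of_forall fun x => ?_)
    simp only [((hasSum_pow_div_factorial _).mul_left _).tsum_eq, norm_mul, Real.norm_eq_abs,
      abs_of_pos (exp_pos _)]
  · have hx := (hasSum_pow_div_factorial (a * u x)).mul_left (f x)
    rwa [show (fun k : ℕ => f x * ((a * u x) ^ k / k !)) = fun k => a ^ k / k ! * (f x * u x ^ k)
      from funext fun k => by ring] at hx

def InvMomentsVanish (g : ℝ → ℝ) : Prop := ∀ m : ℕ, ∫ t in Ioi 0, g t * t⁻¹ ^ m = 0

section InvMoments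

variable {δ C : ℝ} {g : ℝ → ℝ}

theorem integrableOn_mul_inv_pow_mul_exp (hδ : 0 < δ)
    (hg : AEStronglyMeasurable g (volume.restrict (Ioi 0)))
    (hbound : ∀ t ∈ Ioi (0 : ℝ), |g t| ≤ C * exp (-δ * (t + t⁻¹))) (m : ℕ) {b : ℝ} (hb : b < δ) :
    IntegrableOn (fun t => g t * t⁻¹ ^ m * exp (b * t⁻¹)) (Ioi 0) := by
  have hC : 0 ≤ C :=
    nonneg_of_mul_nonneg_left ((abs_nonneg _).trans (hbound 1 (by norm_num))) (exp_pos _)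
  refine Integrable.mono' ((exp_neg_integrableOn_Ioi 0 hδ).const_mul (C * (m ! / (δ - b) ^ m)))
    ((hg.mul (by fun_prop)).mul (by fun_prop))
    ((ae_restrict_iff' measurableSet_Ioi).2 (.of_forall fun t ht => ?_))
  have ht' : 0 < t⁻¹ := inv_pos.2 ht
  have hexp : exp (-δ * (t + t⁻¹)) * exp (b * t⁻¹) = exp (-((δ - b) * t⁻¹)) * exp (-δ * t) := by
    rw [← exp_add, ← exp_add]
    ring_nf
  calc ‖g t * t⁻¹ ^ m * exp (b * t⁻¹)‖ = |g t| * t⁻¹ ^ m * exp (b * t⁻¹) := by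
        rw [Real.norm_eq_abs, abs_mul, abs_mul, abs_of_pos (pow_pos ht' m), abs_of_pos (exp_pos _)]
    _ ≤ C * exp (-δ * (t + t⁻¹)) * t⁻¹ ^ m * exp (b * t⁻¹) := by gcongr; exact hbound t ht
    _ = C * (t⁻¹ ^ m * exp (-((δ - b) * t⁻¹))) * exp (-δ * t) := by
        linear_combination C * t⁻¹ ^ m * hexp
    _ ≤ C * (m ! / (δ - b) ^ m) * exp (-δ * t) := by
        gcongr
        exact pow_mul_exp_neg_mul_le (sub_pos.2 hb) ht'.le m

theorem InvMomentsVanish.mul_exp (hδ : 0 < δ)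
    (hg : AEStronglyMeasurable g (volume.restrict (Ioi 0)))
    (hbound : ∀ t ∈ Ioi (0 : ℝ), |g t| ≤ C * exp (-δ * (t + t⁻¹))) (hmom : InvMomentsVanish g)
    {a : ℝ} (ha : |a| < δ) :
    InvMomentsVanish (fun t => g t * exp (a * t⁻¹)) := by
  intro m
  have hint : IntegrableOn (fun t => g t * t⁻¹ ^ m * exp (|a| * |t⁻¹|)) (Ioi 0) :=
    (integrableOn_mul_inv_pow_mul_exp hδ hg hbound m ha).congr_fun
      (fun t ht => by rw [abs_of_pos (inv_pos.2 (show 0 < t from ht))]) measurableSet_Ioi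
  have hsum := hasSum_integral_mul_exp (f := fun t => g t * t⁻¹ ^ m) (u := fun t => t⁻¹)
    (hg.mul (by fun_prop)) (by fun_prop) a hint
  have hterm (k : ℕ) : ∫ t in Ioi 0, g t * t⁻¹ ^ m * t⁻¹ ^ k = 0 := by
    simpa only [mul_assoc, ← pow_add] using hmom (m + k)
  simp only [hterm, mul_zero] at hsum
  refine Eq.trans ?_ (hsum.unique hasSum_zero)
  congr 1
  funext t
  ring

theorem InvMomentsVanish.mul_exp_neg_pow (hδ : 0 < δ)
    (hg : AEStronglyMeasurable g (volume.restrict (Ioi 0)))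
    (hbound : ∀ t ∈ Ioi (0 : ℝ), |g t| ≤ C * exp (-δ * (t + t⁻¹))) (hmom : InvMomentsVanish g)
    {a : ℝ} (ha₀ : 0 ≤ a) (haδ : a < δ) (n : ℕ) :
    InvMomentsVanish (fun t => g t * exp (-a * t⁻¹) ^ n) := by
  -- `0 ≤ a` preserves the decay bound, so `mul_exp` can be applied again
  induction n with
  | zero => simpa using hmom
  | succ n ih =>
    have hbound' : ∀ t ∈ Ioi (0 : ℝ), |g t * exp (-a * t⁻¹) ^ n| ≤ C * exp (-δ * (t + t⁻¹)) := by
      intro t ht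
      have hexp : exp (-a * t⁻¹) ≤ 1 :=
        exp_le_one_iff.2 (mul_nonpos_of_nonpos_of_nonneg (neg_nonpos.2 ha₀) (inv_pos.2 ht).le)
      rw [abs_mul, abs_pow, abs_of_pos (exp_pos _)]
      exact (mul_le_of_le_one_right (abs_nonneg _) (pow_le_one₀ (exp_pos _).le hexp)).trans
        (hbound t ht)
    have hgn : AEStronglyMeasurable (fun t => g t * exp (-a * t⁻¹) ^ n) (volume.restrict (Ioi 0)) :=
      hg.mul (by fun_prop)
    have := ih.mul_exp hδ hgn hbound' (a := -a) (by rwa [abs_neg, abs_of_nonneg ha₀])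
    simpa only [pow_succ, mul_assoc] using this

theorem InvMomentsVanish.integral_mul_exp_neg_inv_pow (hδ : 0 < δ)
    (hg : AEStronglyMeasurable g (volume.restrict (Ioi 0)))
    (hbound : ∀ t ∈ Ioi (0 : ℝ), |g t| ≤ C * exp (-δ * (t + t⁻¹))) (hmom : InvMomentsVanish g)
    (k : ℕ) :
    ∫ t in Ioi 0, g t * exp (-t⁻¹) ^ k = 0 := by
  -- reach the integer exponents `k` in steps `1 / (N + 1) < δ`
  obtain ⟨N, hN⟩ := exists_nat_one_div_lt hδ
  have hpow (t : ℝ) : exp (-(1 / (N + 1)) * t⁻¹) ^ (N + 1) = exp (-t⁻¹) := by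
    rw [← exp_nat_mul]
    push_cast
    field_simp
  simpa only [pow_mul, hpow, pow_zero, mul_one] using
    hmom.mul_exp_neg_pow hδ hg hbound (by positivity) hN ((N + 1) * k) 0

end InvMoments

theorem integral_mul_eq_zero_of_forall_pow {H : ℝ → ℝ} {a b : ℝ} (hint : IntegrableOn H (Icc a b))
    (hmom : ∀ n : ℕ, ∫ v in Icc a b, H v * v ^ n = 0) {g : ℝ → ℝ} (hg : ContinuousOn g (Icc a b)) :
    ∫ v in Icc a b, H v * g v = 0 := by
  have hint_mul {g : ℝ → ℝ} (hg : ContinuousOn g (Icc a b)) :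
      IntegrableOn (fun v => H v * g v) (Icc a b) :=
    hint.mul_continuousOn hg isCompact_Icc
  have hpoly (p : ℝ[X]) : ∫ v in Icc a b, H v * p.eval v = 0 := by
    induction p using Polynomial.induction_on' with
    | add p q hp hq =>
      simp only [eval_add, mul_add]
      rw [integral_add (hint_mul p.continuousOn) (hint_mul q.continuousOn), hp, hq, add_zero]
    | monomial n c =>
      simp only [eval_monomial, mul_left_comm _ c]
      rw [integral_const_mul, hmom, mul_zero]
  have hI : 0 ≤ ∫ v in Icc a b, |H v| := integral_nonneg fun v => abs_nonneg _
  refine abs_nonpos_iff.1 (le_of_forall_pos_le_add fun ε hε => ?_)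
  obtain ⟨p, hp⟩ := exists_polynomial_near_of_continuousOn a b g hg
    (ε / ((∫ v in Icc a b, |H v|) + 1)) (by positivity)
  calc |∫ v in Icc a b, H v * g v|
      = ‖∫ v in Icc a b, H v * (g v - p.eval v)‖ := by
        simp only [mul_sub]
        rw [integral_sub (hint_mul hg) (hint_mul p.continuousOn), hpoly, sub_zero,
          Real.norm_eq_abs]
    _ ≤ ∫ v in Icc a b, |H v| * (ε / ((∫ v in Icc a b, |H v|) + 1)) := by
        refine norm_integral_le_of_norm_le (hint.norm.mul_const _)
          ((ae_restrict_iff' measurableSet_Icc).2 (.of_forall fun v hv => ?_))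
        rw [norm_mul, Real.norm_eq_abs, Real.norm_eq_abs, abs_sub_comm]
        gcongr
        exact (hp v hv).le
    _ = (∫ v in Icc a b, |H v|) * (ε / ((∫ v in Icc a b, |H v|) + 1)) := integral_mul_const _ _
    _ ≤ 0 + ε := by
        rw [zero_add, mul_div_assoc', div_le_iff₀ (by positivity)]
        nlinarith [hI]

theorem eqOn_zero_of_integral_mul_pow_eq_zero {H : ℝ → ℝ} {a b : ℝ}
    (hcont : ContinuousOn H (Ioo a b)) (hint : IntegrableOn H (Ioo a b))
    (hmom : ∀ n : ℕ, ∫ v in Ioo a b, H v * v ^ n = 0) : EqOn H 0 (Ioo a b) := by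
  have hint' : IntegrableOn H (Icc a b) := by rwa [integrableOn_Icc_iff_integrableOn_Ioo]
  have htest (g : ℝ → ℝ) (hg : ContDiff ℝ ∞ g) (_ : HasCompactSupport g) :
      ∫ v in Ioo a b, g v • H v = 0 := by
    simp only [smul_eq_mul, mul_comm (g _)]
    rw [← integral_Icc_eq_integral_Ioo]
    exact integral_mul_eq_zero_of_forall_pow hint'
      (fun n => by rw [integral_Icc_eq_integral_Ioo, hmom]) hg.continuous.continuousOn
  refine Measure.eqOn_of_ae_eq (ae_eq_zero_of_integral_contDiff_smul_eq_zero
    hint.locallyIntegrable htest) hcont continuousOn_const ?_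
  rw [interior_Ioo]
  exact subset_closure

theorem image_exp_neg_inv_Ioi : (fun t : ℝ => exp (-t⁻¹)) '' Ioi 0 = Ioo 0 1 := by
  ext v
  constructor
  · rintro ⟨t, ht, rfl⟩
    exact ⟨exp_pos _, exp_lt_one_iff.2 (neg_lt_zero.2 (inv_pos.2 ht))⟩
  · rintro ⟨hv₀, hv₁⟩
    refine ⟨-(log v)⁻¹, inv_pos.2 (neg_pos.2 (log_neg hv₀ hv₁)) |>.trans_eq ?_, ?_⟩
    · rw [inv_neg]
    · simp [exp_log hv₀]

theorem injOn_exp_neg_inv : InjOn (fun t : ℝ => exp (-t⁻¹)) (Ioi 0) :=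
  fun _ _ _ _ h => inv_injective (neg_injective (exp_injective h))

theorem hasDerivAt_exp_neg_inv {t : ℝ} (ht : t ≠ 0) :
    HasDerivAt (fun t => exp (-t⁻¹)) (exp (-t⁻¹) * (t ^ 2)⁻¹) t := by
  simpa using ((hasDerivAt_inv ht).neg).exp

theorem eqOn_zero_of_integral_mul_exp_neg_inv_pow_eq_zero {f : ℝ → ℝ}
    (hf : ContinuousOn f (Ioi 0)) (hint : IntegrableOn (fun t => f t * exp (-t⁻¹)) (Ioi 0))
    (hmom : ∀ n : ℕ, ∫ t in Ioi 0, f t * exp (-t⁻¹) ^ (n + 1) = 0) : EqOn f 0 (Ioi 0) := by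
  -- `H (exp (-t⁻¹)) d(exp (-t⁻¹)) = f t * exp (-t⁻¹) dt`
  set H : ℝ → ℝ := fun v => f (-(log v)⁻¹) * (log v)⁻¹ ^ 2
  have hH (t : ℝ) : H (exp (-t⁻¹)) = f t * t ^ 2 := by simp [H]
  have hderiv : ∀ t ∈ Ioi (0 : ℝ),
      HasDerivWithinAt (fun t => exp (-t⁻¹)) (exp (-t⁻¹) * (t ^ 2)⁻¹) (Ioi 0) t :=
    fun t ht => (hasDerivAt_exp_neg_inv (ne_of_gt ht)).hasDerivWithinAt
  have hchange (n : ℕ) :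
      EqOn (fun t => |exp (-t⁻¹) * (t ^ 2)⁻¹| • (H (exp (-t⁻¹)) * exp (-t⁻¹) ^ n))
        (fun t => f t * exp (-t⁻¹) ^ (n + 1)) (Ioi 0) := fun t ht => by
    have : t ≠ 0 := ne_of_gt ht
    simp only [hH, smul_eq_mul, abs_of_pos (by positivity : 0 < exp (-t⁻¹) * (t ^ 2)⁻¹)]
    field_simp
    ring
  have hcont : ContinuousOn H (Ioo 0 1) := by
    have hlog : ∀ v ∈ Ioo (0 : ℝ) 1, log v < 0 := fun v hv => log_neg hv.1 hv.2
    have hinv : ContinuousOn (fun v => (log v)⁻¹) (Ioo 0 1) :=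
      (continuousOn_log.mono fun v hv => ne_of_gt hv.1).inv₀ fun v hv => (hlog v hv).ne
    refine (hf.comp hinv.neg fun v hv => ?_).mul (hinv.pow 2)
    exact neg_pos.2 (inv_lt_zero.2 (hlog v hv))
  have hintH : IntegrableOn H (Ioo 0 1) := by
    have : IntegrableOn (fun v => H v * v ^ 0) (Ioo 0 1) := by
      rw [← image_exp_neg_inv_Ioi, integrableOn_image_iff_integrableOn_abs_deriv_smul
        measurableSet_Ioi hderiv injOn_exp_neg_inv]
      exact (hint.congr_fun (by simpa using (hchange 0).symm) measurableSet_Ioi)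
    simpa using this
  have hmomH (n : ℕ) : ∫ v in Ioo 0 1, H v * v ^ n = 0 := by
    rw [← image_exp_neg_inv_Ioi, integral_image_eq_integral_abs_deriv_smul measurableSet_Ioi
      hderiv injOn_exp_neg_inv, setIntegral_congr_fun measurableSet_Ioi (hchange n), hmom]
  intro t ht
  have := eqOn_zero_of_integral_mul_pow_eq_zero hcont hintH hmomH
    (image_exp_neg_inv_Ioi ▸ mem_image_of_mem _ ht)
  rw [hH] at this
  exact (mul_eq_zero.1 this).resolve_right (pow_ne_zero 2 (ne_of_gt ht))

theorem abs_le_mul_exp_neg_mul_add_inv {δ c : ℝ} {f : ℝ → ℝ} (hδ : 0 ≤ δ)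
    (h1 : ∀ t : ℝ, 1 ≤ t → |f t| ≤ c * exp (-δ * t))
    (h2 : ∀ t : ℝ, 0 < t → t ≤ 1 → |f t| ≤ c * exp (-δ / t)) :
    ∀ t ∈ Ioi (0 : ℝ), |f t| ≤ c * exp δ * exp (-δ * (t + t⁻¹)) := by
  have hc : 0 ≤ c := nonneg_of_mul_nonneg_left ((abs_nonneg _).trans (h1 1 le_rfl)) (exp_pos _)
  intro t ht
  rw [mul_assoc, ← exp_add]
  rcases le_total 1 t with h | h
  · refine (h1 t h).trans (mul_le_mul_of_nonneg_left (exp_le_exp.2 ?_) hc)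
    nlinarith [inv_le_one_of_one_le₀ h]
  · refine (h2 t ht h).trans (mul_le_mul_of_nonneg_left (exp_le_exp.2 ?_) hc)
    rw [neg_div, div_eq_mul_inv]
    nlinarith

theorem stmt_10 (δ c : ℝ) (hδ : 0 < δ) (f : ℝ → ℝ)
    (hf : ContinuousOn f (Set.Ioi 0))
    (h1 : ∀ t : ℝ, 1 ≤ t → |f t| ≤ c * Real.exp (-δ * t))
    (h2 : ∀ t : ℝ, 0 < t → t ≤ 1 → |f t| ≤ c * Real.exp (-δ / t))
    (hmom : ∀ m : ℕ, ∫ t in Set.Ioi (0 : ℝ), f t * t ^ (-(m : ℝ)) = 0) :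
    ∀ t : ℝ, 0 < t → f t = 0 := by
  have hbound := abs_le_mul_exp_neg_mul_add_inv hδ.le h1 h2
  have hmeas : AEStronglyMeasurable f (volume.restrict (Ioi 0)) :=
    hf.aestronglyMeasurable measurableSet_Ioi
  have hinv : InvMomentsVanish f := fun m => by
    simpa [rpow_neg_natCast, zpow_neg, zpow_natCast, inv_pow] using hmom m
  have hint : IntegrableOn (fun t => f t * exp (-t⁻¹)) (Ioi 0) := by
    simpa using integrableOn_mul_inv_pow_mul_exp hδ hmeas hbound 0 (b := -1) (by linarith)
  exact eqOn_zero_of_integral_mul_exp_neg_inv_pow_eq_zero hf hint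
    fun n => hinv.integral_mul_exp_neg_inv_pow hδ hmeas hbound (n + 1)
end

section
/- Let H be a real Hilbert space, V ⊂ H a closed subspace, B₀ a symmetric bounded bilinear form on H, and Q₁, Q₂ symmetric bounded bilinear forms on H. For j = 1, 2 and each f ∈ H let u_f^{(j)} satisfy u_f^{(j)} − f ∈ V and (B₀ + Q_j)(u_f^{(j)}, η) = 0 for all η ∈ V. Then for all f, g ∈ H: (B₀+Q₁)(u_f^{(1)}, g) − (B₀+Q₂)(u_g^{(2)}, f) = Q₁(u_f^{(1)}, u_g^{(2)}) − Q₂(u_f^{(1)}, u_g^{(2)}). -/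
theorem stmt_13 {H : Type*} [NormedAddCommGroup H] [NormedSpace ℝ H]
    (B₀ Q₁ Q₂ : H →ₗ[ℝ] H →ₗ[ℝ] ℝ)
    (hB₀ : ∀ x y : H, B₀ x y = B₀ y x)
    (hQ₁ : ∀ x y : H, Q₁ x y = Q₁ y x)
    (hQ₂ : ∀ x y : H, Q₂ x y = Q₂ y x)
    (V : Submodule ℝ H) (hVclosed : IsClosed (V : Set H))
    (u₁ u₂ : H → H)
    (hu₁ : ∀ f : H, u₁ f - f ∈ V)
    (hu₂ : ∀ f : H, u₂ f - f ∈ V)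
    (hsol₁ : ∀ f : H, ∀ η ∈ V, B₀ (u₁ f) η + Q₁ (u₁ f) η = 0)
    (hsol₂ : ∀ f : H, ∀ η ∈ V, B₀ (u₂ f) η + Q₂ (u₂ f) η = 0) :
    ∀ f g : H,
      (B₀ (u₁ f) g + Q₁ (u₁ f) g) - (B₀ (u₂ g) f + Q₂ (u₂ g) f) =
        Q₁ (u₁ f) (u₂ g) - Q₂ (u₁ f) (u₂ g) := by
  intro f g
  have h1 := hsol₁ f (u₂ g - g) (hu₂ g)
  have h2 := hsol₂ g (u₁ f - f) (hu₁ f)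
  simp only [map_sub] at h1 h2
  have e1 : B₀ (u₂ g) (u₁ f) = B₀ (u₁ f) (u₂ g) := hB₀ _ _
  have e2 : Q₂ (u₂ g) (u₁ f) = Q₂ (u₁ f) (u₂ g) := hQ₂ _ _
  linarith
end
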